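/- arXiv:0802.0981 — 7 statements merged into one kernel-verified Lean document; each statement's English description precedes it below -/
import Mathlib

section
/- Let (X,τ) be a topological space and φ₁, φ₂ operations on X. If φ₂ is regular with respect to the family of φ₁-open sets, then the family of φ₁₂-open subsets of X is a topology on X (it contains ∅ and X and is closed under arbitrary unions and finite intersections), and a subset K of X is closed with respect to this topology if and only if φ₁₂cl K ⊆ K. -/
open Set

/-- An operation on a topological space `X`: a map `φ : Set X → Set X` with
`interior A ⊆ φ A` for all `A` and `φ ∅ = ∅`. -/
def IsOperation {X : Type*} [TopologicalSpace X] (φ : Set X → Set X) : Prop :=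
  (∀ A : Set X, interior A ⊆ φ A) ∧ φ ∅ = ∅

/-- `A` is `φ`-open if `A ⊆ φ A`. -/
def PhiOpen {X : Type*} (φ : Set X → Set X) (A : Set X) : Prop := A ⊆ φ A

/-- `φ₁₂`-interior: `x ∈ φ₁₂int A` iff there is a `φ₁`-open `U` with `x ∈ U` and `φ₂ U ⊆ A`. -/
def PhiInt {X : Type*} (φ₁ φ₂ : Set X → Set X) (A : Set X) : Set X :=
  {x | ∃ U : Set X, PhiOpen φ₁ U ∧ x ∈ U ∧ φ₂ U ⊆ A}

/-- `φ₁₂`-closure: `x ∈ φ₁₂cl A` iff `φ₂ U ∩ A ≠ ∅` for every `φ₁`-open `U` containing `x`. -/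
def PhiCl {X : Type*} (φ₁ φ₂ : Set X → Set X) (A : Set X) : Set X :=
  {x | ∀ U : Set X, PhiOpen φ₁ U → x ∈ U → (φ₂ U ∩ A).Nonempty}

/-- `A` is `φ₁₂`-open if `A ⊆ φ₁₂int A`. -/
def Phi12Open {X : Type*} (φ₁ φ₂ : Set X → Set X) (A : Set X) : Prop :=
  A ⊆ PhiInt φ₁ φ₂ A

/-- `φ₂` is regular w.r.t. the family of `φ₁`-open sets. -/
def PhiRegular {X : Type*} (φ₂ φ₁ : Set X → Set X) : Prop :=
  ∀ x : X, ∀ U V : Set X, PhiOpen φ₁ U → PhiOpen φ₁ V → x ∈ U → x ∈ V →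
    ∃ W : Set X, PhiOpen φ₁ W ∧ x ∈ W ∧ φ₂ W ⊆ φ₂ U ∩ φ₂ V

/-- A filter `F` `φ₁₂`-converges to `a` if for every `φ₁`-open `U` containing `a`
there is `S ∈ F` with `S ⊆ φ₂ U`. -/
def PhiConv {X : Type*} (φ₁ φ₂ : Set X → Set X) (F : Filter X) (a : X) : Prop :=
  ∀ U : Set X, PhiOpen φ₁ U → a ∈ U → ∃ S ∈ F, S ⊆ φ₂ U

/-- A filter `F` `φ₁₂`-accumulates to `a` if `a ∈ φ₁₂cl S` for every `S ∈ F`. -/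
def PhiAcc {X : Type*} (φ₁ φ₂ : Set X → Set X) (F : Filter X) (a : X) : Prop :=
  ∀ S ∈ F, a ∈ PhiCl φ₁ φ₂ S

/-- `X` is `φ₁₂`-T₂. -/
def PhiT2 {X : Type*} (φ₁ φ₂ : Set X → Set X) : Prop :=
  ∀ x y : X, x ≠ y → ∃ U V : Set X, PhiOpen φ₁ U ∧ PhiOpen φ₁ V ∧
    x ∈ U ∧ y ∈ V ∧ φ₂ U ∩ φ₂ V = ∅

/-- `A` is `φ₁₂`-compact relative to `X`. -/
def PhiCompact {X : Type*} (φ₁ φ₂ : Set X → Set X) (A : Set X) : Prop :=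
  ∀ 𝒰 : Set (Set X), (∀ U ∈ 𝒰, PhiOpen φ₁ U) → A ⊆ ⋃₀ 𝒰 →
    ∃ 𝒰' ⊆ 𝒰, 𝒰'.Finite ∧ A ⊆ ⋃ U ∈ 𝒰', φ₂ U

section PhiInterior

variable {X : Type*} (φ₁ φ₂ : Set X → Set X)

theorem phiOpen_univ_of_isOperation [TopologicalSpace X] {φ : Set X → Set X}
    (hφ : IsOperation φ) : PhiOpen φ univ := by
  simpa only [PhiOpen, interior_univ] using hφ.1 univ

theorem phiInt_mono {A B : Set X} (hAB : A ⊆ B) : PhiInt φ₁ φ₂ A ⊆ PhiInt φ₁ φ₂ B :=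
  fun _ ⟨U, hU, hxU, hUA⟩ => ⟨U, hU, hxU, hUA.trans hAB⟩

theorem phiInt_compl (K : Set X) : PhiInt φ₁ φ₂ Kᶜ = (PhiCl φ₁ φ₂ K)ᶜ := by
  ext x
  simp only [PhiInt, PhiCl, mem_compl_iff, mem_ofPred_eq, not_forall, exists_prop,
    not_nonempty_iff_eq_empty, ← disjoint_iff_inter_eq_empty, subset_compl_iff_disjoint_right]

theorem phi12Open_empty : Phi12Open φ₁ φ₂ ∅ :=
  empty_subset _

theorem phi12Open_univ [TopologicalSpace X] (h₁ : IsOperation φ₁) : Phi12Open φ₁ φ₂ univ :=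
  fun x _ => ⟨univ, phiOpen_univ_of_isOperation h₁, mem_univ x, subset_univ _⟩

theorem phi12Open_sUnion {𝒮 : Set (Set X)} (h𝒮 : ∀ A ∈ 𝒮, Phi12Open φ₁ φ₂ A) :
    Phi12Open φ₁ φ₂ (⋃₀ 𝒮) := by
  rintro x ⟨A, hA, hxA⟩
  exact phiInt_mono φ₁ φ₂ (subset_sUnion_of_mem hA) (h𝒮 A hA hxA)

theorem Phi12Open.inter {φ₁ φ₂ : Set X → Set X} (hreg : PhiRegular φ₂ φ₁) {A B : Set X}
    (hA : Phi12Open φ₁ φ₂ A) (hB : Phi12Open φ₁ φ₂ B) : Phi12Open φ₁ φ₂ (A ∩ B) := by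
  rintro x ⟨hxA, hxB⟩
  obtain ⟨U, hU, hxU, hUA⟩ := hA hxA
  obtain ⟨V, hV, hxV, hVB⟩ := hB hxB
  obtain ⟨W, hW, hxW, hWUV⟩ := hreg x U V hU hV hxU hxV
  exact ⟨W, hW, hxW, hWUV.trans (inter_subset_inter hUA hVB)⟩

theorem phi12Open_compl_iff (K : Set X) : Phi12Open φ₁ φ₂ Kᶜ ↔ PhiCl φ₁ φ₂ K ⊆ K := by
  rw [Phi12Open, phiInt_compl, compl_subset_compl]

end PhiInterior

theorem stmt_1_general {X : Type*} [TopologicalSpace X] (φ₁ φ₂ : Set X → Set X)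
    (h₁ : IsOperation φ₁)
    (hreg : PhiRegular φ₂ φ₁) :
    (Phi12Open φ₁ φ₂ (∅ : Set X) ∧ Phi12Open φ₁ φ₂ (Set.univ : Set X) ∧
      (∀ 𝒮 : Set (Set X), (∀ A ∈ 𝒮, Phi12Open φ₁ φ₂ A) → Phi12Open φ₁ φ₂ (⋃₀ 𝒮)) ∧
      (∀ A B : Set X, Phi12Open φ₁ φ₂ A → Phi12Open φ₁ φ₂ B → Phi12Open φ₁ φ₂ (A ∩ B))) ∧
    (∀ K : Set X, Phi12Open φ₁ φ₂ Kᶜ ↔ PhiCl φ₁ φ₂ K ⊆ K) :=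
  ⟨⟨phi12Open_empty φ₁ φ₂, phi12Open_univ φ₁ φ₂ h₁, fun _ => phi12Open_sUnion φ₁ φ₂,
    fun _ _ => Phi12Open.inter hreg⟩, phi12Open_compl_iff φ₁ φ₂⟩

/-- If `φ₂` is regular w.r.t. the `φ₁`-open sets, then the `φ₁₂`-open sets
form a topology (contain `∅`, `X`, closed under arbitrary unions and finite intersections),
and `K` is closed w.r.t. this topology iff `φ₁₂cl K ⊆ K`. -/
theorem stmt_1 {X : Type*} [TopologicalSpace X] (φ₁ φ₂ : Set X → Set X)
    (h₁ : IsOperation φ₁) (h₂ : IsOperation φ₂)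
    (hreg : PhiRegular φ₂ φ₁) :
    (Phi12Open φ₁ φ₂ (∅ : Set X) ∧ Phi12Open φ₁ φ₂ (Set.univ : Set X) ∧
      (∀ 𝒮 : Set (Set X), (∀ A ∈ 𝒮, Phi12Open φ₁ φ₂ A) → Phi12Open φ₁ φ₂ (⋃₀ 𝒮)) ∧
      (∀ A B : Set X, Phi12Open φ₁ φ₂ A → Phi12Open φ₁ φ₂ B → Phi12Open φ₁ φ₂ (A ∩ B))) ∧
    (∀ K : Set X, Phi12Open φ₁ φ₂ Kᶜ ↔ PhiCl φ₁ φ₂ K ⊆ K) :=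
  stmt_1_general φ₁ φ₂ h₁ hreg
end

section
/- Let (X,τ) be a topological space, φ₁, φ₂ operations on X with φ₂ regular with respect to the family of φ₁-open sets, ℱ a proper filter on X, and a ∈ X. Then ℱ φ₁₂-accumulates to a if and only if there exists a proper filter ℱ' on X with ℱ ⊆ ℱ' such that ℱ' φ₁₂-converges to a. -/
open Set

/-!
The sets `φ₂ U`, for `U` a `φ₁`-open set containing `a`, generate a filter playing the role of
`𝓝 a`: a filter `φ₁₂`-converges to `a` iff it is finer than it. Regularity of `φ₂` makes these
sets a directed family, hence a filter basis, so `F` `φ₁₂`-accumulates to `a` iff the infimum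
of `F` with this filter is proper, and that infimum is then the required finer convergent filter.
-/

open Filter

theorem Filter.inf_neBot_iff_exists_le {α : Type*} (f g : Filter α) :
    (f ⊓ g).NeBot ↔ ∃ h : Filter α, h.NeBot ∧ h ≤ f ∧ h ≤ g :=
  ⟨fun hfg => ⟨f ⊓ g, hfg, inf_le_left, inf_le_right⟩,
    fun ⟨_, hh, hf, hg⟩ => hh.mono (le_inf hf hg)⟩

theorem IsOperation.phiOpen_univ {X : Type*} [TopologicalSpace X] {φ : Set X → Set X}
    (hφ : IsOperation φ) : PhiOpen φ univ := by
  simpa only [PhiOpen, interior_univ] using hφ.1 univ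

section PhiNhds

variable {X : Type*} {φ₁ φ₂ : Set X → Set X} {a : X}

def phiNhds (φ₁ φ₂ : Set X → Set X) (a : X) : Filter X :=
  ⨅ (U) (_ : PhiOpen φ₁ U ∧ a ∈ U), 𝓟 (φ₂ U)

theorem phiConv_iff_le_phiNhds {F : Filter X} : PhiConv φ₁ φ₂ F a ↔ F ≤ phiNhds φ₁ φ₂ a := by
  simp only [PhiConv, phiNhds, le_iInf_iff, le_principal_iff, exists_mem_subset_iff, and_imp]

theorem PhiRegular.phiNhds_hasBasis (hreg : PhiRegular φ₂ φ₁) (hne : ∃ U, PhiOpen φ₁ U ∧ a ∈ U) :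
    (phiNhds φ₁ φ₂ a).HasBasis (fun U => PhiOpen φ₁ U ∧ a ∈ U) φ₂ :=
  hasBasis_biInf_principal'
    (fun U ⟨hU, haU⟩ V ⟨hV, haV⟩ =>
      let ⟨W, hW, haW, hWUV⟩ := hreg a U V hU hV haU haV
      ⟨W, ⟨hW, haW⟩, hWUV.trans inter_subset_left, hWUV.trans inter_subset_right⟩)
    hne

theorem PhiRegular.phiAcc_iff_inf_phiNhds_neBot (hreg : PhiRegular φ₂ φ₁)
    (hne : ∃ U, PhiOpen φ₁ U ∧ a ∈ U) {F : Filter X} :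
    PhiAcc φ₁ φ₂ F a ↔ (F ⊓ phiNhds φ₁ φ₂ a).NeBot := by
  rw [F.basis_sets.inf_basis_neBot_iff (hreg.phiNhds_hasBasis hne)]
  simp only [PhiAcc, PhiCl, mem_ofPred_eq, and_imp, inter_comm, id]

end PhiNhds

theorem stmt_5_general {X : Type*} [TopologicalSpace X] (φ₁ φ₂ : Set X → Set X)
    (h₁ : IsOperation φ₁)
    (hreg : PhiRegular φ₂ φ₁)
    (F : Filter X) (a : X) :
    PhiAcc φ₁ φ₂ F a ↔
      ∃ F' : Filter X, F'.NeBot ∧ (∀ S ∈ F, S ∈ F') ∧ PhiConv φ₁ φ₂ F' a := by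
  rw [hreg.phiAcc_iff_inf_phiNhds_neBot ⟨univ, h₁.phiOpen_univ, mem_univ a⟩,
    inf_neBot_iff_exists_le]
  simp only [phiConv_iff_le_phiNhds, Filter.le_def]

/-- If `φ₂` is regular w.r.t. the `φ₁`-open sets, a proper filter `F`
`φ₁₂`-accumulates to `a` iff there is a finer proper filter `F'` that `φ₁₂`-converges to `a`. -/
theorem stmt_5 {X : Type*} [TopologicalSpace X] (φ₁ φ₂ : Set X → Set X)
    (h₁ : IsOperation φ₁) (h₂ : IsOperation φ₂)
    (hreg : PhiRegular φ₂ φ₁)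
    (F : Filter X) (hF : F.NeBot) (a : X) :
    PhiAcc φ₁ φ₂ F a ↔
      ∃ F' : Filter X, F'.NeBot ∧ (∀ S ∈ F, S ∈ F') ∧ PhiConv φ₁ φ₂ F' a :=
  stmt_5_general φ₁ φ₂ h₁ hreg F a
end

section
/- Let (X,τ) be a topological space, φ₁, φ₂ operations on X, ℱ an ultrafilter on X, and a ∈ X. If ℱ φ₁₂-accumulates to a, then ℱ φ₁₂-converges to a. -/
open Set

theorem notMem_phiCl_compl_phi {X : Type*} {φ₁ φ₂ : Set X → Set X} {U : Set X}
    (hU : PhiOpen φ₁ U) {a : X} (ha : a ∈ U) : a ∉ PhiCl φ₁ φ₂ (φ₂ U)ᶜ := fun hcl =>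
  let ⟨_, hx, hxc⟩ := hcl U hU ha
  hxc hx

theorem stmt_6_general {X : Type*} (φ₁ φ₂ : Set X → Set X)
    (F : Ultrafilter X) (a : X)
    (hacc : PhiAcc φ₁ φ₂ (F : Filter X) a) : PhiConv φ₁ φ₂ (F : Filter X) a := by
  intro U hU haU
  have hcompl : (φ₂ U)ᶜ ∉ F := fun h => notMem_phiCl_compl_phi hU haU (hacc _ h)
  exact ⟨φ₂ U, Ultrafilter.compl_notMem_iff.mp hcompl, subset_rfl⟩

/-- If an ultrafilter `φ₁₂`-accumulates to `a`, then it `φ₁₂`-converges to `a`. -/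
theorem stmt_6 {X : Type*} [TopologicalSpace X] (φ₁ φ₂ : Set X → Set X)
    (h₁ : IsOperation φ₁) (h₂ : IsOperation φ₂)
    (F : Ultrafilter X) (a : X)
    (hacc : PhiAcc φ₁ φ₂ (F : Filter X) a) : PhiConv φ₁ φ₂ (F : Filter X) a :=
  stmt_6_general φ₁ φ₂ F a hacc
end

section
/- Let (X,τ) be a topological space and φ₁, φ₂ operations on X such that X is φ₁₂-T₂. If a proper filter ℱ on X φ₁₂-converges to a point a ∈ X and φ₁₂-accumulates to a point b ∈ X, then a = b. -/
open Set

theorem PhiConv.inter_nonempty_of_phiAcc {X : Type*} {φ₁ φ₂ : Set X → Set X} {F : Filter X}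
    {a b : X} (hconv : PhiConv φ₁ φ₂ F a) (hacc : PhiAcc φ₁ φ₂ F b) {U V : Set X}
    (hU : PhiOpen φ₁ U) (hV : PhiOpen φ₁ V) (haU : a ∈ U) (hbV : b ∈ V) :
    (φ₂ U ∩ φ₂ V).Nonempty := by
  obtain ⟨S, hSF, hSU⟩ := hconv U hU haU
  obtain ⟨x, hxV, hxS⟩ := hacc S hSF V hV hbV
  exact ⟨x, hSU hxS, hxV⟩

theorem stmt_8_general {X : Type*} (φ₁ φ₂ : Set X → Set X)
    (hT2 : PhiT2 φ₁ φ₂)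
    (F : Filter X) (a b : X)
    (hconv : PhiConv φ₁ φ₂ F a) (hacc : PhiAcc φ₁ φ₂ F b) : a = b := by
  by_contra hne
  obtain ⟨U, V, hU, hV, haU, hbV, hdisj⟩ := hT2 a b hne
  exact (hconv.inter_nonempty_of_phiAcc hacc hU hV haU hbV).ne_empty hdisj

/-- In a `φ₁₂`-T₂ space, if a proper filter `φ₁₂`-converges to `a`
and `φ₁₂`-accumulates to `b`, then `a = b`. -/
theorem stmt_8 {X : Type*} [TopologicalSpace X] (φ₁ φ₂ : Set X → Set X)
    (h₁ : IsOperation φ₁) (h₂ : IsOperation φ₂)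
    (hT2 : PhiT2 φ₁ φ₂)
    (F : Filter X) (hF : F.NeBot) (a b : X)
    (hconv : PhiConv φ₁ φ₂ F a) (hacc : PhiAcc φ₁ φ₂ F b) : a = b :=
  stmt_8_general φ₁ φ₂ hT2 F a b hconv hacc
end

section
/- Let (X,τ) be a topological space, φ₁, φ₂ operations on X, and A ⊆ X. Then A is φ₁₂-compact if and only if every proper filter ℱ on X that meets A (i.e., F ∩ A ≠ ∅ for every F ∈ ℱ) φ₁₂-accumulates to some point of A. -/
open Set

open Filter

/-!
Accumulation is a statement about complements: `F` fails to `φ₁₂`-accumulate to `a` exactly when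
`(φ₂ U)ᶜ ∈ F` for some `φ₁`-open `U ∋ a`. Given compactness and a filter meeting `A` with no
accumulation point in `A`, these witnesses cover `A`, a finite subfamily `φ₂`-covers it, and the
intersection of the finitely many complements is a member of `F` missing `A`. Conversely, a cover
of `A` without finite `φ₂`-subcover makes the filter generated by the sets `(φ₂ U)ᶜ` meet `A`, and
its accumulation point in `A` would lie in some `U` with `(φ₂ U)ᶜ ∈ F`.
-/

section

variable {X : Type*}

theorem phiAcc_iff {φ₁ φ₂ : Set X → Set X} {F : Filter X} {a : X} :
    PhiAcc φ₁ φ₂ F a ↔ ∀ U, PhiOpen φ₁ U → a ∈ U → (φ₂ U)ᶜ ∉ F := by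
  constructor
  · intro hacc U hU haU hcompl
    obtain ⟨x, hx, hxc⟩ := hacc _ hcompl U hU haU
    exact hxc hx
  · intro h S hS U hU haU
    by_contra hempty
    exact h U hU haU (mem_of_superset hS fun x hxS hxU => hempty ⟨x, hxU, hxS⟩)

theorem PhiCompact.exists_phiAcc {φ₁ φ₂ : Set X → Set X} {A : Set X} (hA : PhiCompact φ₁ φ₂ A)
    {F : Filter X} (hF : ∀ S ∈ F, (S ∩ A).Nonempty) : ∃ a ∈ A, PhiAcc φ₁ φ₂ F a := by
  by_contra! hno
  have hcover : A ⊆ ⋃₀ {U | PhiOpen φ₁ U ∧ (φ₂ U)ᶜ ∈ F} := by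
    intro a ha
    obtain ⟨U, hU, haU, hcompl⟩ : ∃ U, PhiOpen φ₁ U ∧ a ∈ U ∧ (φ₂ U)ᶜ ∈ F := by
      simpa [phiAcc_iff] using hno a ha
    exact ⟨U, ⟨hU, hcompl⟩, haU⟩
  obtain ⟨𝒰', h𝒰', hfin, hsub⟩ := hA _ (fun U hU => hU.1) hcover
  have hmem : (⋃ U ∈ 𝒰', φ₂ U)ᶜ ∈ F := by
    rw [compl_iUnion₂]
    exact (biInter_mem hfin).2 fun U hU => (h𝒰' hU).2
  obtain ⟨x, hx, hxA⟩ := hF _ hmem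
  exact hx (hsub hxA)

theorem inter_nonempty_of_mem_biInf_principal_compl {ι : Type*} {s : ι → Set X} {I : Set ι}
    {A : Set X} (h : ∀ J ⊆ I, J.Finite → ¬A ⊆ ⋃ i ∈ J, s i) {S : Set X}
    (hS : S ∈ ⨅ i ∈ I, 𝓟 (s i)ᶜ) : (S ∩ A).Nonempty := by
  obtain ⟨J, hfin, hJ, hsub⟩ := mem_biInf_principal.1 hS
  obtain ⟨x, hxA, hx⟩ := not_subset.1 (h J hJ hfin)
  refine ⟨x, hsub ?_, hxA⟩
  rw [← compl_iUnion₂]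
  exact hx

theorem phiCompact_of_forall_exists_phiAcc {φ₁ φ₂ : Set X → Set X} {A : Set X}
    (h : ∀ F : Filter X, F.NeBot → (∀ S ∈ F, (S ∩ A).Nonempty) → ∃ a ∈ A, PhiAcc φ₁ φ₂ F a) :
    PhiCompact φ₁ φ₂ A := by
  intro 𝒰 hopen hcover
  by_contra! hno
  set F : Filter X := ⨅ U ∈ 𝒰, 𝓟 (φ₂ U)ᶜ
  have hF : ∀ S ∈ F, (S ∩ A).Nonempty := fun _ hS =>
    inter_nonempty_of_mem_biInf_principal_compl hno hS
  obtain ⟨a, ha, hacc⟩ := h F ((inf_principal_neBot_iff.2 hF).mono inf_le_left) hF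
  obtain ⟨U, hU, haU⟩ := hcover ha
  have hcompl : (φ₂ U)ᶜ ∈ F := mem_iInf_of_mem U (mem_iInf_of_mem hU (mem_principal_self _))
  exact phiAcc_iff.1 hacc U (hopen U hU) haU hcompl

end

theorem stmt_14_general {X : Type*} (φ₁ φ₂ : Set X → Set X)
    (A : Set X) :
    PhiCompact φ₁ φ₂ A ↔
      ∀ F : Filter X, F.NeBot → (∀ S ∈ F, (S ∩ A).Nonempty) →
        ∃ a ∈ A, PhiAcc φ₁ φ₂ F a :=
  ⟨fun hA _ _ hF => hA.exists_phiAcc hF, phiCompact_of_forall_exists_phiAcc⟩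

/-- `A` is `φ₁₂`-compact iff every proper filter meeting `A`
`φ₁₂`-accumulates to some point of `A`. -/
theorem stmt_14 {X : Type*} [TopologicalSpace X] (φ₁ φ₂ : Set X → Set X)
    (h₁ : IsOperation φ₁) (h₂ : IsOperation φ₂) (A : Set X) :
    PhiCompact φ₁ φ₂ A ↔
      ∀ F : Filter X, F.NeBot → (∀ S ∈ F, (S ∩ A).Nonempty) →
        ∃ a ∈ A, PhiAcc φ₁ φ₂ F a :=
  stmt_14_general φ₁ φ₂ A
end

section
/- Let (X,τ) be a topological space, φ₁, φ₂ operations on X, and A ⊆ X. Then A is φ₁₂-compact if and only if every ultrafilter ℱ on X that meets A (i.e., F ∩ A ≠ ∅ for every F ∈ ℱ) φ₁₂-converges to some point of A. -/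
open Set

/-!
An ultrafilter containing a finite union contains one of its members, so compactness
forces convergence: otherwise the `φ₁`-open sets `U` with `φ₂ U ∉ F` would cover `A`
with no finite subfamily whose `φ₂`-images cover. Conversely, if no finite subfamily of
a cover works, `A` together with the complements `(φ₂ U)ᶜ` has the finite intersection
property, and an ultrafilter containing them all converges to no point of `A`.
-/

theorem Ultrafilter.forall_inter_nonempty_iff_mem {X : Type*} (F : Ultrafilter X) (A : Set X) :
    (∀ S ∈ (F : Filter X), (S ∩ A).Nonempty) ↔ A ∈ F :=
  Filter.inf_principal_neBot_iff.symm.trans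
    (Ultrafilter.inf_neBot_iff.trans Filter.le_principal_iff)

theorem exists_finite_subcover_iff_forall_ultrafilter {X : Type*} (A : Set X)
    (𝒱 : Set (Set X)) :
    (∃ t ⊆ 𝒱, t.Finite ∧ A ⊆ ⋃₀ t) ↔ ∀ F : Ultrafilter X, A ∈ F → ∃ V ∈ 𝒱, V ∈ F := by
  constructor
  · rintro ⟨t, ht𝒱, ht, hAt⟩ F hAF
    obtain ⟨V, hVt, hVF⟩ :=
      (Ultrafilter.finite_sUnion_mem_iff ht).1 (F.mem_of_superset hAF hAt)
    exact ⟨V, ht𝒱 hVt, hVF⟩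
  · intro h
    by_contra hcover
    have hfip : ∀ T : Finset (Set X), (T : Set (Set X)) ⊆ insert A (compl '' 𝒱) →
        (⋂₀ (T : Set (Set X))).Nonempty := by
      intro T hT
      have hfin : (compl ⁻¹' (T : Set (Set X)) ∩ 𝒱).Finite :=
        (T.finite_toSet.preimage compl_injective.injOn).inter_of_left _
      obtain ⟨x, hxA, hx⟩ := not_subset.1 fun hA => hcover ⟨_, inter_subset_right, hfin, hA⟩
      refine ⟨x, fun S hS => ?_⟩
      rcases hT hS with rfl | ⟨V, hV, rfl⟩
      · exact hxA
      · exact fun hxV => hx ⟨V, ⟨hS, hV⟩, hxV⟩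
    obtain ⟨F, hF⟩ := Ultrafilter.exists_ultrafilter_of_finite_inter_nonempty _ hfip
    obtain ⟨V, hV, hVF⟩ := h F (hF (mem_insert _ _))
    exact Ultrafilter.compl_mem_iff_notMem.1 (hF (mem_insert_of_mem _ ⟨V, hV, rfl⟩)) hVF

theorem phiConv_iff_forall_mem {X : Type*} (φ₁ φ₂ : Set X → Set X) (F : Filter X) (a : X) :
    PhiConv φ₁ φ₂ F a ↔ ∀ U, PhiOpen φ₁ U → a ∈ U → φ₂ U ∈ F := by
  simp only [PhiConv, Filter.exists_mem_subset_iff]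

theorem phiCompact_iff_forall_ultrafilter {X : Type*} (φ₁ φ₂ : Set X → Set X) (A : Set X) :
    PhiCompact φ₁ φ₂ A ↔ ∀ 𝒰 : Set (Set X), (∀ U ∈ 𝒰, PhiOpen φ₁ U) → A ⊆ ⋃₀ 𝒰 →
      ∀ F : Ultrafilter X, A ∈ F → ∃ U ∈ 𝒰, φ₂ U ∈ F := by
  refine forall₃_congr fun 𝒰 _ _ => ?_
  simpa only [exists_subset_image_finite_and, sUnion_image, exists_mem_image] using
    exists_finite_subcover_iff_forall_ultrafilter A (φ₂ '' 𝒰)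

theorem stmt_15_general {X : Type*} (φ₁ φ₂ : Set X → Set X) (A : Set X) :
    PhiCompact φ₁ φ₂ A ↔
      ∀ F : Ultrafilter X, (∀ S ∈ (F : Filter X), (S ∩ A).Nonempty) →
        ∃ a ∈ A, PhiConv φ₁ φ₂ (F : Filter X) a := by
  simp only [Ultrafilter.forall_inter_nonempty_iff_mem, phiConv_iff_forall_mem,
    phiCompact_iff_forall_ultrafilter]
  constructor
  · intro hcompact F hAF
    by_contra! hnoconv
    have hcover : A ⊆ ⋃₀ {U | PhiOpen φ₁ U ∧ φ₂ U ∉ F} := fun a ha => by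
      obtain ⟨U, hU, haU, hUF⟩ := hnoconv a ha
      exact ⟨U, ⟨hU, hUF⟩, haU⟩
    obtain ⟨U, ⟨-, hUF⟩, hU⟩ := hcompact _ (fun U hU => hU.1) hcover F hAF
    exact hUF hU
  · intro hconv 𝒰 h𝒰 hcover F hAF
    obtain ⟨a, ha, haF⟩ := hconv F hAF
    obtain ⟨U, hU, haU⟩ := hcover ha
    exact ⟨U, hU, haF U (h𝒰 U hU) haU⟩

/-- `A` is `φ₁₂`-compact iff every ultrafilter meeting `A`
`φ₁₂`-converges to some point of `A`. -/
theorem stmt_15 {X : Type*} [TopologicalSpace X] (φ₁ φ₂ : Set X → Set X)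
    (h₁ : IsOperation φ₁) (h₂ : IsOperation φ₂) (A : Set X) :
    PhiCompact φ₁ φ₂ A ↔
      ∀ F : Ultrafilter X, (∀ S ∈ (F : Filter X), (S ∩ A).Nonempty) →
        ∃ a ∈ A, PhiConv φ₁ φ₂ (F : Filter X) a :=
  stmt_15_general φ₁ φ₂ A
end

section
/- Let (X,τ) be a topological space and φ₁, φ₂ operations on X such that φ₁ is monotone (A ⊆ B implies φ₁(A) ⊆ φ₁(B)) and φ₂(U ∪ V) = φ₂(U) ∪ φ₂(V) for all φ₁-open sets U, V. Then for A ⊆ X the following are equivalent: (a) A is φ₁₂-compact; (b) every filterbase ℱ_b consisting of sets of the form X ∖ φ₂(U) with U φ₁-open, such that every member of ℱ_b meets A, φ₁₂-accumulates to some point of A (i.e., there is a ∈ A with a ∈ φ₁₂cl F for every F ∈ ℱ_b). -/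
open Set

/-!
If `A` is `φ₁₂`-compact and a filterbase `ℱb` meeting `A` had no `φ₁₂`-accumulation
point in `A`, every `a ∈ A` would lie in a `φ₁`-open `U` with `φ₂ U` missing some member of `ℱb`;
a finite subfamily has `φ₂`-images covering `A`, and a member of `ℱb` below the finitely many
members they miss cannot meet `A`. Conversely, a `φ₁`-open cover of `A` without finite
`φ₂`-subcover yields the filterbase of the sets `X \ φ₂ (⋃ 𝒱)`, `𝒱` a finite subfamily; its members
meet `A` because `φ₂` commutes with finite unions of `φ₁`-open sets, and an accumulation point in
`A` is impossible since it lies in some `U` of the cover while `X \ φ₂ U` is a member.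
-/

section

variable {X : Type*} {φ₁ φ₂ : Set X → Set X}

theorem PhiOpen.sUnion (hmono : Monotone φ₁) {𝒰 : Set (Set X)}
    (h𝒰 : ∀ U ∈ 𝒰, PhiOpen φ₁ U) : PhiOpen φ₁ (⋃₀ 𝒰) := by
  rintro x ⟨U, hU, hxU⟩
  exact hmono (subset_sUnion_of_mem hU) (h𝒰 U hU hxU)

theorem phi_sUnion_of_finite (hmono : Monotone φ₁) (hempty : φ₂ ∅ = ∅)
    (hunion : ∀ U V : Set X, PhiOpen φ₁ U → PhiOpen φ₁ V → φ₂ (U ∪ V) = φ₂ U ∪ φ₂ V)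
    {𝒱 : Set (Set X)} (hfin : 𝒱.Finite) (h𝒱 : ∀ U ∈ 𝒱, PhiOpen φ₁ U) :
    φ₂ (⋃₀ 𝒱) = ⋃ U ∈ 𝒱, φ₂ U := by
  induction 𝒱, hfin using Set.Finite.induction_on with
  | empty => simp [hempty]
  | @insert V 𝒱 _ _ ih =>
    have h𝒱' : ∀ U ∈ 𝒱, PhiOpen φ₁ U := fun U hU => h𝒱 U (mem_insert_of_mem V hU)
    rw [sUnion_insert, hunion V _ (h𝒱 V (mem_insert V 𝒱)) (PhiOpen.sUnion hmono h𝒱'), ih h𝒱',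
      biUnion_insert]

theorem PhiCompact.exists_mem_phiAcc {A : Set X} (hA : PhiCompact φ₁ φ₂ A) {l : Filter X}
    (hl : ∀ S ∈ l, (S ∩ A).Nonempty) : ∃ a ∈ A, PhiAcc φ₁ φ₂ l a := by
  by_contra! hno
  let 𝒰 : Set (Set X) := {U | PhiOpen φ₁ U ∧ (φ₂ U)ᶜ ∈ l}
  have hcov : A ⊆ ⋃₀ 𝒰 := by
    intro a ha
    obtain ⟨S, hS, U, hU, haU, hUS⟩ : ∃ S ∈ l, ∃ U, PhiOpen φ₁ U ∧ a ∈ U ∧ ¬(φ₂ U ∩ S).Nonempty :=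
      by simpa [PhiAcc, PhiCl] using hno a ha
    refine ⟨U, ⟨hU, Filter.mem_of_superset hS fun x hxS hxU => hUS ⟨x, hxU, hxS⟩⟩, haU⟩
  obtain ⟨𝒱, h𝒱, hfin, hsub⟩ := hA 𝒰 (fun U hU => hU.1) hcov
  obtain ⟨x, hx, hxA⟩ := hl _ ((Filter.biInter_mem hfin).2 fun U hU => (h𝒱 hU).2)
  obtain ⟨U, hU, hxU⟩ := mem_iUnion₂.1 (hsub hxA)
  exact mem_iInter₂.1 hx U hU hxU

theorem PhiCompact.exists_forall_mem_phiCl {A : Set X} (hA : PhiCompact φ₁ φ₂ A)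
    {ℱb : Set (Set X)} (hne : ℱb.Nonempty)
    (hdir : ∀ F₁ ∈ ℱb, ∀ F₂ ∈ ℱb, ∃ F₃ ∈ ℱb, F₃ ⊆ F₁ ∩ F₂) (hmeet : ∀ F ∈ ℱb, (F ∩ A).Nonempty) :
    ∃ a ∈ A, ∀ F ∈ ℱb, a ∈ PhiCl φ₁ φ₂ F := by
  have hb : (⨅ F ∈ ℱb, Filter.principal F).HasBasis (· ∈ ℱb) id :=
    Filter.hasBasis_biInf_principal' (fun F₁ h₁ F₂ h₂ => by
      obtain ⟨F₃, h₃, hF₃⟩ := hdir F₁ h₁ F₂ h₂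
      exact ⟨F₃, h₃, subset_inter_iff.1 hF₃⟩) hne
  obtain ⟨a, ha, hacc⟩ := hA.exists_mem_phiAcc fun S hS => by
    obtain ⟨F, hF, hFS⟩ := hb.mem_iff.1 hS
    exact (hmeet F hF).mono (inter_subset_inter_left A hFS)
  exact ⟨a, ha, fun F hF => hacc F (hb.mem_of_mem hF)⟩

theorem phiCompact_of_forall_filterbase (hmono : Monotone φ₁) (hempty : φ₂ ∅ = ∅)
    (hunion : ∀ U V : Set X, PhiOpen φ₁ U → PhiOpen φ₁ V → φ₂ (U ∪ V) = φ₂ U ∪ φ₂ V)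
    {A : Set X}
    (h : ∀ ℱb : Set (Set X), ℱb.Nonempty → (∀ F ∈ ℱb, F.Nonempty) →
      (∀ F₁ ∈ ℱb, ∀ F₂ ∈ ℱb, ∃ F₃ ∈ ℱb, F₃ ⊆ F₁ ∩ F₂) →
      (∀ F ∈ ℱb, ∃ U : Set X, PhiOpen φ₁ U ∧ F = (φ₂ U)ᶜ) →
      (∀ F ∈ ℱb, (F ∩ A).Nonempty) → ∃ a ∈ A, ∀ F ∈ ℱb, a ∈ PhiCl φ₁ φ₂ F) :
    PhiCompact φ₁ φ₂ A := by
  intro 𝒰 h𝒰 hcov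
  by_contra! hnc
  let ℱb := (fun 𝒱 => (φ₂ (⋃₀ 𝒱))ᶜ) '' {𝒱 | 𝒱 ⊆ 𝒰 ∧ 𝒱.Finite}
  have hopen : ∀ 𝒱 ⊆ 𝒰, PhiOpen φ₁ (⋃₀ 𝒱) := fun 𝒱 h𝒱 =>
    PhiOpen.sUnion hmono fun U hU => h𝒰 U (h𝒱 hU)
  have hmeet : ∀ F ∈ ℱb, (F ∩ A).Nonempty := by
    rintro _ ⟨𝒱, ⟨h𝒱, hfin⟩, rfl⟩
    dsimp only
    rw [phi_sUnion_of_finite hmono hempty hunion hfin fun U hU => h𝒰 U (h𝒱 hU)]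
    obtain ⟨x, hxA, hx⟩ := not_subset.1 (hnc 𝒱 h𝒱 hfin)
    exact ⟨x, hx, hxA⟩
  have hdir : ∀ F₁ ∈ ℱb, ∀ F₂ ∈ ℱb, ∃ F₃ ∈ ℱb, F₃ ⊆ F₁ ∩ F₂ := by
    rintro _ ⟨𝒱₁, ⟨h𝒱₁, hfin₁⟩, rfl⟩ _ ⟨𝒱₂, ⟨h𝒱₂, hfin₂⟩, rfl⟩
    refine ⟨_, ⟨𝒱₁ ∪ 𝒱₂, ⟨union_subset h𝒱₁ h𝒱₂, hfin₁.union hfin₂⟩, rfl⟩, ?_⟩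
    dsimp only
    rw [sUnion_union, hunion _ _ (hopen 𝒱₁ h𝒱₁) (hopen 𝒱₂ h𝒱₂), compl_union]
  have hform : ∀ F ∈ ℱb, ∃ U : Set X, PhiOpen φ₁ U ∧ F = (φ₂ U)ᶜ := by
    rintro _ ⟨𝒱, ⟨h𝒱, -⟩, rfl⟩
    exact ⟨⋃₀ 𝒱, hopen 𝒱 h𝒱, rfl⟩
  obtain ⟨a, ha, hacc⟩ := h ℱb ⟨_, ∅, ⟨empty_subset 𝒰, finite_empty⟩, rfl⟩
    (fun F hF => (hmeet F hF).mono inter_subset_left) hdir hform hmeet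
  obtain ⟨U, hU, haU⟩ := hcov ha
  have hUmem : (φ₂ U)ᶜ ∈ ℱb :=
    ⟨{U}, ⟨singleton_subset_iff.2 hU, finite_singleton U⟩, by simp only [sUnion_singleton]⟩
  exact (hacc _ hUmem U (h𝒰 U hU) haU).ne_empty (inter_compl_self _)

end

theorem stmt_19_general {X : Type*} [TopologicalSpace X] (φ₁ φ₂ : Set X → Set X)
    (h₂ : IsOperation φ₂)
    (hmono : ∀ A B : Set X, A ⊆ B → φ₁ A ⊆ φ₁ B)
    (hunion : ∀ U V : Set X, PhiOpen φ₁ U → PhiOpen φ₁ V → φ₂ (U ∪ V) = φ₂ U ∪ φ₂ V)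
    (A : Set X) :
    PhiCompact φ₁ φ₂ A ↔
      ∀ ℱb : Set (Set X),
        ℱb.Nonempty →
        (∀ F ∈ ℱb, F.Nonempty) →
        (∀ F₁ ∈ ℱb, ∀ F₂ ∈ ℱb, ∃ F₃ ∈ ℱb, F₃ ⊆ F₁ ∩ F₂) →
        (∀ F ∈ ℱb, ∃ U : Set X, PhiOpen φ₁ U ∧ F = (φ₂ U)ᶜ) →
        (∀ F ∈ ℱb, (F ∩ A).Nonempty) →
        ∃ a ∈ A, ∀ F ∈ ℱb, a ∈ PhiCl φ₁ φ₂ F :=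
  ⟨fun hA _ hne _ hdir _ hmeet => hA.exists_forall_mem_phiCl hne hdir hmeet,
    phiCompact_of_forall_filterbase hmono h₂.2 hunion⟩

/-- If `φ₁` is monotone and `φ₂ (U ∪ V) = φ₂ U ∪ φ₂ V` for all `φ₁`-open
`U`, `V`, then `A` is `φ₁₂`-compact iff every filterbase consisting of sets of the form
`X \ φ₂ U` (`U` `φ₁`-open), each member of which meets `A`, `φ₁₂`-accumulates to some
point of `A`. -/
theorem stmt_19 {X : Type*} [TopologicalSpace X] (φ₁ φ₂ : Set X → Set X)
    (h₁ : IsOperation φ₁) (h₂ : IsOperation φ₂)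
    (hmono : ∀ A B : Set X, A ⊆ B → φ₁ A ⊆ φ₁ B)
    (hunion : ∀ U V : Set X, PhiOpen φ₁ U → PhiOpen φ₁ V → φ₂ (U ∪ V) = φ₂ U ∪ φ₂ V)
    (A : Set X) :
    PhiCompact φ₁ φ₂ A ↔
      ∀ ℱb : Set (Set X),
        ℱb.Nonempty →
        (∀ F ∈ ℱb, F.Nonempty) →
        (∀ F₁ ∈ ℱb, ∀ F₂ ∈ ℱb, ∃ F₃ ∈ ℱb, F₃ ⊆ F₁ ∩ F₂) →
        (∀ F ∈ ℱb, ∃ U : Set X, PhiOpen φ₁ U ∧ F = (φ₂ U)ᶜ) →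
        (∀ F ∈ ℱb, (F ∩ A).Nonempty) →
        ∃ a ∈ A, ∀ F ∈ ℱb, a ∈ PhiCl φ₁ φ₂ F :=
  stmt_19_general φ₁ φ₂ h₂ hmono hunion A
end
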